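/- The functions u₁(ξ,τ) = 1 − (1/4)ξ²τ² and u₂(ξ,τ) = 1 − (1/2)(ξ² + τ²), defined for all (ξ,τ) ∈ ℝ², satisfy the spacetime wave map system ∂²u₁/∂τ² − ∂²u₁/∂ξ² = (1/(2u₁))((∂u₁/∂τ)² + (∂u₂/∂τ)² − (∂u₁/∂ξ)² − (∂u₂/∂ξ)²) and ∂²u₂/∂τ² − ∂²u₂/∂ξ² = (1/u₁)((∂u₁/∂τ)(∂u₂/∂τ) − (∂u₁/∂ξ)(∂u₂/∂ξ)) at every point with u₁(ξ,τ) ≠ 0, together with the initial conditions u₁(ξ,0) = 1, u₂(ξ,0) = 1 − (1/2)ξ², ∂u₁/∂τ(ξ,0) = 0, ∂u₂/∂τ(ξ,0) = 0 for all ξ ∈ ℝ. -/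

import Mathlib

/-- Partial derivative with respect to the first variable `ξ`. -/
noncomputable def pdXi (f : ℝ × ℝ → ℝ) (p : ℝ × ℝ) : ℝ :=
  deriv (fun x => f (x, p.2)) p.1

/-- Partial derivative with respect to the second variable `τ`. -/
noncomputable def pdTau (f : ℝ × ℝ → ℝ) (p : ℝ × ℝ) : ℝ :=
  deriv (fun t => f (p.1, t)) p.2

/-- The globally defined spacetime solution `u₁` of Example 4.2; `p = (ξ, τ)`. -/
noncomputable def U1 : ℝ × ℝ → ℝ := fun p => 1 - (1 / 4) * p.1 ^ 2 * p.2 ^ 2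

/-- The globally defined spacetime solution `u₂` of Example 4.2; `p = (ξ, τ)`. -/
noncomputable def U2 : ℝ × ℝ → ℝ := fun p => 1 - (1 / 2) * (p.1 ^ 2 + p.2 ^ 2)

/-! All partial derivatives of `u₁` and `u₂` up to second order are polynomials. The numerator
of the first equation factors as `(τ² − ξ²) u₁`, so the singular factor `1 / u₁` cancels, and the
numerator of the second equation vanishes identically. -/

theorem pdXi_eq_of_hasDerivAt {f g : ℝ × ℝ → ℝ}
    (h : ∀ p : ℝ × ℝ, HasDerivAt (fun x => f (x, p.2)) (g p) p.1) : pdXi f = g :=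
  funext fun p => (h p).deriv

theorem pdTau_eq_of_hasDerivAt {f g : ℝ × ℝ → ℝ}
    (h : ∀ p : ℝ × ℝ, HasDerivAt (fun t => f (p.1, t)) (g p) p.2) : pdTau f = g :=
  funext fun p => (h p).deriv

theorem hasDerivAt_sq {𝕜 : Type*} [NontriviallyNormedField 𝕜] (x : 𝕜) :
    HasDerivAt (fun x => x ^ 2) (2 * x) x := by
  simpa using hasDerivAt_pow 2 x

theorem pdXi_U1 : pdXi U1 = fun p => -(1 / 2) * p.1 * p.2 ^ 2 :=
  pdXi_eq_of_hasDerivAt fun p =>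
    ((((hasDerivAt_sq p.1).const_mul (1 / 4)).mul_const (p.2 ^ 2)).const_sub 1).congr_deriv
      (by ring)

theorem pdTau_U1 : pdTau U1 = fun p => -(1 / 2) * p.1 ^ 2 * p.2 :=
  pdTau_eq_of_hasDerivAt fun p =>
    (((hasDerivAt_sq p.2).const_mul (1 / 4 * p.1 ^ 2)).const_sub 1).congr_deriv (by ring)

theorem pdXi_U2 : pdXi U2 = fun p => -p.1 :=
  pdXi_eq_of_hasDerivAt fun p =>
    ((((hasDerivAt_sq p.1).add_const (p.2 ^ 2)).const_mul (1 / 2)).const_sub 1).congr_deriv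
      (by ring)

theorem pdTau_U2 : pdTau U2 = fun p => -p.2 :=
  pdTau_eq_of_hasDerivAt fun p =>
    ((((hasDerivAt_sq p.2).const_add (p.1 ^ 2)).const_mul (1 / 2)).const_sub 1).congr_deriv
      (by ring)

theorem pdXi_pdXi_U1 : pdXi (pdXi U1) = fun p => -(1 / 2) * p.2 ^ 2 :=
  pdXi_eq_of_hasDerivAt fun p => by
    rw [pdXi_U1]
    exact (((hasDerivAt_id' p.1).const_mul (-(1 / 2))).mul_const (p.2 ^ 2)).congr_deriv
      (by ring)

theorem pdTau_pdTau_U1 : pdTau (pdTau U1) = fun p => -(1 / 2) * p.1 ^ 2 :=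
  pdTau_eq_of_hasDerivAt fun p => by
    rw [pdTau_U1]
    exact ((hasDerivAt_id' p.2).const_mul (-(1 / 2) * p.1 ^ 2)).congr_deriv (by ring)

theorem pdXi_pdXi_U2 : pdXi (pdXi U2) = fun _ => -1 :=
  pdXi_eq_of_hasDerivAt fun p => by
    rw [pdXi_U2]
    exact (hasDerivAt_id' p.1).neg

theorem pdTau_pdTau_U2 : pdTau (pdTau U2) = fun _ => -1 :=
  pdTau_eq_of_hasDerivAt fun p => by
    rw [pdTau_U2]
    exact (hasDerivAt_id' p.2).neg

/-- the globally defined pair `(U1, U2)` of Example 4.2 satisfies the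
spacetime wave map system at every point where `U1 ≠ 0`, together with the initial
conditions `u₁(ξ,0) = 1`, `u₂(ξ,0) = 1 − ξ²/2` and vanishing initial `τ`-derivatives. -/
theorem example42_global_solution :
    (∀ p : ℝ × ℝ, U1 p ≠ 0 →
      pdTau (pdTau U1) p - pdXi (pdXi U1) p =
        (1 / (2 * U1 p)) *
          ((pdTau U1 p) ^ 2 + (pdTau U2 p) ^ 2 - (pdXi U1 p) ^ 2 - (pdXi U2 p) ^ 2) ∧
      pdTau (pdTau U2) p - pdXi (pdXi U2) p =
        (1 / U1 p) * (pdTau U1 p * pdTau U2 p - pdXi U1 p * pdXi U2 p)) ∧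
    (∀ ξ : ℝ,
      U1 (ξ, 0) = 1 ∧ U2 (ξ, 0) = 1 - (1 / 2) * ξ ^ 2 ∧
      pdTau U1 (ξ, 0) = 0 ∧ pdTau U2 (ξ, 0) = 0) := by
  refine ⟨fun p hp => ?_, fun ξ => ?_⟩
  · rw [pdXi_pdXi_U1, pdTau_pdTau_U1, pdXi_pdXi_U2, pdTau_pdTau_U2,
      pdXi_U1, pdTau_U1, pdXi_U2, pdTau_U2, one_div, one_div, inv_mul_eq_div,
      eq_div_iff (mul_ne_zero two_ne_zero hp)]
    constructor
    · simp only [U1]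
      ring
    · ring
  · simp [U1, U2, pdTau_U1, pdTau_U2]
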